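/- arXiv:1505.06036 — 3 statements merged into one kernel-verified Lean document; each statement's English description precedes it below -/
import Mathlib

section
/- Let T be a finite tree whose leaves are enumerated without repetition as c_0, …, c_{k−1} (k ≥ 3), let i be an index, and let r be an internal vertex lying on the path in T from c_i to c_{(i+1) mod k}. Suppose that for every internal vertex u of T, L^r(u) is cyclically consecutive. Then for every internal vertex u, L^r(u) is consecutive in the linear ordering c_{(i+1) mod k}, c_{(i+2) mod k}, …, c_{(i+k) mod k}; that is, there exist integers s, m with 1 ≤ s, m ≥ 0 and s+m ≤ k such that L^r(u) = {c_{(i+t) mod k} : s ≤ t ≤ s+m}. -/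
open SimpleGraph Set Function

/-- `u` is an ancestor of `v` with respect to root `r`:
`u` lies on the unique path in `T` from `r` to `v`. -/
def IsAncestor {V : Type*} (T : SimpleGraph V) (r u v : V) : Prop :=
  ∀ p : T.Walk r v, p.IsPath → u ∈ p.support

/-- `u` is the parent of `v` with respect to root `r`. -/
def IsParent {V : Type*} (T : SimpleGraph V) (r u v : V) : Prop :=
  IsAncestor T r u v ∧ u ≠ v ∧ T.Adj u v

/-- `L^r(u)`: the set of leaves of `T` that are descendants of `u`. -/
def LeafSet {V : Type*} (T : SimpleGraph V) [Fintype V] [DecidableRel T.Adj] (r u : V) :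
    Set V :=
  {c | T.degree c = 1 ∧ IsAncestor T r u c}

/-- The leaf `c_{j mod k}` index. -/
def cidx {k : ℕ} (hk : 0 < k) (j : ℕ) : Fin k := ⟨j % k, Nat.mod_lt _ hk⟩

/-- A set `A` of leaves is cyclically consecutive with respect to the enumeration `c`. -/
def CycConsec {V : Type*} {k : ℕ} (hk : 0 < k) (c : Fin k → V) (A : Set V) : Prop :=
  ∃ j m : ℕ, A = {x | ∃ t ≤ m, x = c (cidx hk (j + t))}

/-!
An arc of the cyclic order of the leaves that does not contain both `c_i` and `c_{i+1}` does not
cross the gap between them, so it is an interval of the linear order `c_{i+1}, …, c_{i+k}`; so is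
the full circle. If `L^r(u)` contained both `c_i` and `c_{i+1}`, then `u` would lie on both halves
of the path from `c_i` through `r` to `c_{i+1}`, hence `u = r`; but `L^r(r)` is the full circle.
-/

section CyclicInterval

variable {V : Type*} {k : ℕ} (hk : 0 < k) (c : Fin k → V)

def cycInterval (j m : ℕ) : Set V := {x | ∃ t ≤ m, x = c (cidx hk (j + t))}

lemma cidx_val (i : Fin k) : cidx hk i = i := Fin.ext (Nat.mod_eq_of_lt i.isLt)

lemma cidx_eq_of_mod_eq {a b : ℕ} (h : a % k = b % k) : cidx hk a = cidx hk b :=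
  Fin.ext h

lemma cycInterval_congr {j j' : ℕ} (h : j % k = j' % k) (m : ℕ) :
    cycInterval hk c j m = cycInterval hk c j' m := by
  have key : ∀ t, cidx hk (j + t) = cidx hk (j' + t) := fun t =>
    cidx_eq_of_mod_eq hk (Nat.ModEq.add_right t h)
  simp only [cycInterval, key]

lemma setOf_linear_interval_eq_cycInterval (i s m : ℕ) :
    {x | ∃ t, s ≤ t ∧ t ≤ s + m ∧ x = c (cidx hk (i + t))} = cycInterval hk c (i + s) m := by
  ext x
  constructor
  · rintro ⟨t, hst, hts, rfl⟩
    exact ⟨t - s, by omega, by rw [Nat.add_assoc, Nat.add_sub_cancel' hst]⟩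
  · rintro ⟨t, ht, rfl⟩
    exact ⟨s + t, by omega, by omega, by rw [Nat.add_assoc]⟩

lemma cycInterval_eq_range {m : ℕ} (hm : k ≤ m + 1) (j : ℕ) :
    cycInterval hk c j m = range c := by
  refine Subset.antisymm (fun x ⟨t, _, hx⟩ => ⟨_, hx.symm⟩) ?_
  rintro _ ⟨a, rfl⟩
  have hj : j % k < k := Nat.mod_lt j hk
  rw [cycInterval_congr hk c (Nat.mod_mod j k).symm]
  by_cases ha : j % k ≤ a
  · exact ⟨a - j % k, by omega, by rw [Nat.add_sub_cancel' ha, cidx_val]⟩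
  · refine ⟨a + k - j % k, by omega, congrArg c (Fin.ext ?_)⟩
    simp [cidx, show j % k + (a + k - j % k) = a + k by omega, Nat.mod_eq_of_lt a.isLt]

lemma le_of_cycInterval_eq_range (hinj : Injective c) {j m : ℕ}
    (h : cycInterval hk c j m = range c) : k ≤ m + 1 := by
  have hsurj : Surjective fun t : Fin (m + 1) => cidx hk (j + t) := by
    intro a
    obtain ⟨t, ht, hct⟩ := h.symm ▸ mem_range_self a
    exact ⟨⟨t, by omega⟩, (hinj hct).symm⟩
  simpa using Fintype.card_le_of_surjective _ hsurj

lemma exists_add_mod_eq (i : Fin k) (j : ℕ) : ∃ s, 1 ≤ s ∧ s ≤ k ∧ (i + s) % k = j % k := by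
  have hj : j % k < k := Nat.mod_lt j i.pos
  by_cases hij : (i : ℕ) < j % k
  · exact ⟨j % k - i, by omega, by omega, by rw [Nat.add_sub_cancel' hij.le, Nat.mod_mod]⟩
  · refine ⟨j % k + k - i, by omega, by omega, ?_⟩
    rw [show (i : ℕ) + (j % k + k - i) = j % k + k by omega, Nat.add_mod_right, Nat.mod_mod]

lemma mem_cycInterval_or_exists_eq (i : Fin k) (j m : ℕ) :
    (c i ∈ cycInterval hk c j m ∧ c (cidx hk (i + 1)) ∈ cycInterval hk c j m) ∨
      ∃ s, 1 ≤ s ∧ s + m ≤ k ∧ cycInterval hk c j m = cycInterval hk c (i + s) m := by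
  obtain ⟨s, hs1, hsk, hs⟩ := exists_add_mod_eq i j
  rw [cycInterval_congr hk c hs.symm]
  by_cases hsm : s + m ≤ k
  · exact Or.inr ⟨s, hs1, hsm, rfl⟩
  refine Or.inl ⟨⟨k - s, by omega, ?_⟩, ⟨k - s + 1, by omega, ?_⟩⟩
  · rw [show (i : ℕ) + s + (k - s) = i + k by omega, ← cidx_val hk i]
    exact congrArg c (cidx_eq_of_mod_eq hk (by simp [cidx]))
  · rw [show (i : ℕ) + s + (k - s + 1) = i + 1 + k by omega]
    exact congrArg c (cidx_eq_of_mod_eq hk (Nat.add_mod_right _ _).symm)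

end CyclicInterval

section Ancestor

variable {V : Type*} {T : SimpleGraph V}

lemma isAncestor_root (r v : V) : IsAncestor T r r v := fun p _ => p.start_mem_support

lemma IsAncestor.eq_root_of_mem_paths [DecidableEq V] {r u a b : V} (ha : IsAncestor T r u a)
    (hb : IsAncestor T r u b) (hab : T.Reachable a b)
    (hr : ∀ p : T.Walk a b, p.IsPath → r ∈ p.support) : u = r := by
  obtain ⟨w⟩ := hab
  have hp := w.bypass_isPath
  have hrp := hr _ hp
  have hua : u ∈ (w.bypass.takeUntil r hrp).support := by
    simpa using ha _ (hp.takeUntil hrp).reverse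
  have hub : u ∈ (w.bypass.dropUntil r hrp).support := hb _ (hp.dropUntil hrp)
  by_contra hur
  have hnd := hp.support_nodup
  rw [← w.bypass.take_spec hrp, Walk.support_append, List.nodup_append] at hnd
  rw [← Walk.cons_tail_support, List.mem_cons] at hub
  exact hnd.2.2 u hua u (hub.resolve_left hur) rfl

end Ancestor

/-- If `r` is an internal vertex on the path from `c_i` to `c_{(i+1) mod k}`
and each `L^r(u)` is cyclically consecutive, then each `L^r(u)` is consecutive in the
linear order `c_{(i+1) mod k}, …, c_{(i+k) mod k}`. -/
theorem stmt2 {V : Type*} [Fintype V] (T : SimpleGraph V) [DecidableRel T.Adj]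
    (hT : T.IsTree) {k : ℕ} (hk : 3 ≤ k) (c : Fin k → V)
    (hinj : Function.Injective c)
    (hleaf : ∀ v : V, T.degree v = 1 ↔ ∃ i : Fin k, v = c i)
    (i : Fin k) (r : V)
    (hrpath : ∀ p : T.Walk (c i) (c (cidx (by omega) ((i : ℕ) + 1))),
      p.IsPath → r ∈ p.support)
    (hcyc : ∀ u : V, 2 ≤ T.degree u → CycConsec (by omega) c (LeafSet T r u)) :
    ∀ u : V, 2 ≤ T.degree u →
      ∃ s m : ℕ, 1 ≤ s ∧ s + m ≤ k ∧
        LeafSet T r u =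
          {x | ∃ t, s ≤ t ∧ t ≤ s + m ∧ x = c (cidx (by omega) ((i : ℕ) + t))} := by
  classical
  intro u hu
  have hk0 : 0 < k := by omega
  obtain ⟨j, m, hA⟩ := hcyc u hu
  change LeafSet T r u = cycInterval hk0 c j m at hA
  simp only [setOf_linear_interval_eq_cycInterval, hA]
  by_cases hm : k ≤ m + 1
  · exact ⟨1, k - 1, le_rfl, by omega, by
      rw [cycInterval_eq_range hk0 c hm, cycInterval_eq_range hk0 c (by omega)]⟩
  obtain ⟨hci, hci1⟩ | h := mem_cycInterval_or_exists_eq hk0 c i j m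
  · rw [← hA] at hci hci1
    have hur : u = r := hci.2.eq_root_of_mem_paths hci1.2 (hT.connected.preconnected _ _) hrpath
    have hroot : LeafSet T r r = range c := by
      ext v
      simp [LeafSet, hleaf, isAncestor_root, eq_comm]
    rw [hur] at hA
    rw [hA] at hroot
    exact absurd (le_of_cycInterval_eq_range hk0 c hinj hroot) hm
  · exact h.imp fun _ hs => ⟨m, hs⟩
end

section
/- In the VPG construction setup: let u, v ∈ V(T) be distinct vertices such that u is an ancestor of v. Then (a) l_y(v) ∉ [l_y(u), r_y(u)]; (b) l_x(v) ∈ [l_x(u), r_x(u)]; and (c) l_y(u) ∈ [l_y(v), r_y(v)] if and only if u is the parent of v. -/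
open SimpleGraph Set Function

/-! A vertex at depth `d` has an L-shape reaching up to height `h - d + 2`; an internal vertex
starts at height `h - d + 1` and a leaf at height `≤ 1 ≤ h - d + 1`. A proper descendant `v` of
`u` is strictly deeper, so its whole vertical segment lies below the horizontal bar of `ℒ_u`,
and it reaches the height of that bar exactly when it is one level deeper, i.e. a child of `u`.
Horizontally, `l_x(v)` is the `l_x`-value of a leaf below `v` (the minimum over a nonempty
finite set, or `v` itself), hence of a leaf below `u`, so it lies between the minimum and the
maximum that define `ℒ_u`. -/

theorem Fin.forall_of_zero_one_mid_last {k : ℕ} (hk : 2 ≤ k) {P : Fin k → Prop}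
    (h0 : P ⟨0, by omega⟩) (h1 : P ⟨1, by omega⟩) (hlast : P ⟨k - 1, by omega⟩)
    (hmid : ∀ i : Fin k, 2 ≤ (i : ℕ) → (i : ℕ) ≤ k - 2 → P i) (i : Fin k) : P i := by
  obtain ⟨i, hi⟩ := i
  rcases (by omega : i = 0 ∨ i = 1 ∨ i = k - 1 ∨ (2 ≤ i ∧ i ≤ k - 2)) with
    rfl | rfl | rfl | ⟨h2, h3⟩
  exacts [h0, h1, hlast, hmid _ h2 h3]

namespace SimpleGraph

variable {V : Type*} {T : SimpleGraph V}

theorem Walk.IsPath.two_le_degree_of_mem_support [Fintype V] [DecidableRel T.Adj] {a c u : V}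
    {p : T.Walk a c} (hp : p.IsPath) (hu : u ∈ p.support) (hua : u ≠ a) (huc : u ≠ c) :
    2 ≤ T.degree u := by
  induction p with
  | nil => exact absurd (by simpa using hu) hua
  | @cons x y z hxy q ih =>
    rw [Walk.cons_isPath_iff] at hp
    obtain rfl | hu := List.mem_cons.1 (Walk.support_cons _ _ ▸ hu)
    · exact absurd rfl hua
    obtain rfl | huy := eq_or_ne u y
    · cases q with
      | nil => exact absurd rfl huc
      | @cons _ d _ hud q' =>
        have hxd : x ≠ d := by rintro rfl; simp at hp
        exact Finset.one_lt_card.2 ⟨x, by simpa using hxy.symm, d, by simpa using hud, hxd⟩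
    · exact ih hp.1 hu huy huc

theorem IsTree.dist_eq_length (hT : T.IsTree) {a c : V} {p : T.Walk a c} (hp : p.IsPath) :
    T.dist a c = p.length := by
  obtain ⟨q, hq, hlen⟩ := hT.connected.exists_path_of_dist a c
  rw [← hlen, (hT.existsUnique_path a c).unique hq hp]

end SimpleGraph

theorem isAncestor_self {V : Type*} (T : SimpleGraph V) (r v : V) : IsAncestor T r v v :=
  fun p _ => p.end_mem_support

namespace IsAncestor

variable {V : Type*} {T : SimpleGraph V} {r u v : V}

theorem ne_root (h : IsAncestor T r u v) (huv : u ≠ v) : v ≠ r := by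
  rintro rfl
  simpa [huv] using h .nil .nil

theorem degree_pos [Fintype V] [DecidableRel T.Adj] (hT : T.Preconnected)
    (h : IsAncestor T r u v) (huv : u ≠ v) : 0 < T.degree v :=
  ((hT v r).some.adj_snd (Walk.not_nil_of_ne (h.ne_root huv))).degree_pos_left

theorem two_le_degree [Fintype V] [DecidableRel T.Adj] (hT : T.Preconnected)
    (hr : 2 ≤ T.degree r) (h : IsAncestor T r u v) (huv : u ≠ v) : 2 ≤ T.degree u := by
  obtain rfl | hur := eq_or_ne u r
  · exact hr
  obtain ⟨p, hp⟩ := hT.exists_isPath r v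
  exact hp.two_le_degree_of_mem_support (h p hp) hur huv

theorem dist_add_dist (hT : T.IsTree) (h : IsAncestor T r u v) :
    T.dist r u + T.dist u v = T.dist r v := by
  classical
  obtain ⟨p, hp⟩ := hT.connected.preconnected.exists_isPath r v
  have hu := h p hp
  rw [hT.dist_eq_length (hp.takeUntil hu), hT.dist_eq_length (hp.dropUntil hu),
    hT.dist_eq_length hp, ← Walk.length_append, p.take_spec hu]

theorem isParent_iff (h : IsAncestor T r u v) (huv : u ≠ v) :
    IsParent T r u v ↔ T.dist u v = 1 := by
  simp [IsParent, h, huv, dist_eq_one_iff_adj]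

theorem leafSet_subset [Fintype V] [DecidableRel T.Adj] (h : IsAncestor T r u v) :
    LeafSet T r v ⊆ LeafSet T r u := by
  classical
  rintro c ⟨hc, hvc⟩
  refine ⟨hc, fun q hq => ?_⟩
  have hv : v ∈ q.support := hvc q hq
  exact q.support_takeUntil_subset_support hv (h _ (hq.takeUntil hv))

end IsAncestor

theorem lShape_bounds_of_degree_pos {V : Type*} [Fintype V] {T : SimpleGraph V}
    [DecidableRel T.Adj] {k : ℕ} {b : Fin k → V} {r : V} {h : ℕ} {lx ly ry : V → ℝ}
    (hleaf : ∀ v : V, T.degree v = 1 → ∃ i : Fin k, v = b i)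
    (hne : ∀ v : V, 2 ≤ T.degree v → (LeafSet T r v).Nonempty)
    (hdist : ∀ v : V, T.dist r v ≤ h)
    (hleafShape : ∀ i : Fin k,
      ly (b i) ≤ 1 ∧ ry (b i) = (h : ℝ) - (T.dist r (b i) : ℝ) + 2)
    (hintv : ∀ v : V, 2 ≤ T.degree v → lx v = sInf (lx '' LeafSet T r v) ∧
      ly v = (h : ℝ) - (T.dist r v : ℝ) + 1 ∧ ry v = (h : ℝ) - (T.dist r v : ℝ) + 2)
    {v : V} (hv : 0 < T.degree v) :
    ly v ≤ (h : ℝ) - (T.dist r v : ℝ) + 1 ∧ ry v = (h : ℝ) - (T.dist r v : ℝ) + 2 ∧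
      lx v ∈ lx '' LeafSet T r v := by
  rcases (by omega : T.degree v = 1 ∨ 2 ≤ T.degree v) with hv1 | hv2
  · obtain ⟨i, rfl⟩ := hleaf _ hv1
    have hdi : (T.dist r (b i) : ℝ) ≤ h := by exact_mod_cast hdist (b i)
    exact ⟨by linarith [(hleafShape i).1], (hleafShape i).2,
      mem_image_of_mem _ ⟨hv1, isAncestor_self T r _⟩⟩
  · obtain ⟨hlx, hly, hry⟩ := hintv v hv2
    exact ⟨hly.le, hry, hlx ▸ ((hne v hv2).image lx).csInf_mem (toFinite _)⟩

/-- properties of the L-shapes of an ancestor-descendant pair. -/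
theorem stmt7
    {V : Type*} [Fintype V] (T : SimpleGraph V) [DecidableRel T.Adj]
    (hT : T.IsTree) {k : ℕ} (hk : 3 ≤ k) (b : Fin k → V)
    (hleaf : ∀ v : V, T.degree v = 1 ↔ ∃ i : Fin k, v = b i)
    (r' : V) (hr' : 2 ≤ T.degree r')
    (hconsec : ∀ u : V, 2 ≤ T.degree u → ∃ s t : Fin k, s ≤ t ∧
        LeafSet T r' u = {x | ∃ j : Fin k, s ≤ j ∧ j ≤ t ∧ x = b j})
    (h : ℕ) (hmax : IsGreatest (Set.range fun u : V => T.dist r' u) h)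
    (lx rx ly ry : V → ℝ)
    (hb0 : lx (b ⟨0, by omega⟩) = 1.5 ∧ rx (b ⟨0, by omega⟩) = (k : ℝ) - 1 ∧
      ly (b ⟨0, by omega⟩) = 0 ∧
      ry (b ⟨0, by omega⟩) = (h : ℝ) - (T.dist r' (b ⟨0, by omega⟩) : ℝ) + 2)
    (hb1 : lx (b ⟨1, by omega⟩) = 1 ∧ rx (b ⟨1, by omega⟩) = 2 ∧
      ly (b ⟨1, by omega⟩) = 1 ∧
      ry (b ⟨1, by omega⟩) = (h : ℝ) - (T.dist r' (b ⟨1, by omega⟩) : ℝ) + 2)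
    (hbk : lx (b ⟨k - 1, by omega⟩) = (k : ℝ) - 1 ∧ rx (b ⟨k - 1, by omega⟩) = (k : ℝ) ∧
      ly (b ⟨k - 1, by omega⟩) = 0 ∧
      ry (b ⟨k - 1, by omega⟩) = (h : ℝ) - (T.dist r' (b ⟨k - 1, by omega⟩) : ℝ) + 2)
    (hbi : ∀ i : Fin k, 2 ≤ (i : ℕ) → (i : ℕ) ≤ k - 2 →
      lx (b i) = ((i : ℕ) : ℝ) ∧ rx (b i) = ((i : ℕ) : ℝ) + 1 ∧ ly (b i) = 1 ∧
      ry (b i) = (h : ℝ) - (T.dist r' (b i) : ℝ) + 2)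
    (hintv : ∀ v : V, 2 ≤ T.degree v →
      lx v = sInf (lx '' LeafSet T r' v) ∧ rx v = sSup (lx '' LeafSet T r' v) ∧
      ly v = (h : ℝ) - (T.dist r' v : ℝ) + 1 ∧ ry v = (h : ℝ) - (T.dist r' v : ℝ) + 2)
    :
    ∀ u v : V, u ≠ v → IsAncestor T r' u v →
      (ly v ∉ Set.Icc (ly u) (ry u)) ∧
      (lx v ∈ Set.Icc (lx u) (rx u)) ∧
      (ly u ∈ Set.Icc (ly v) (ry v) ↔ IsParent T r' u v) := by
  intro u v huv hanc
  have hconn : T.Connected := hT.connected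
  have hleafShape : ∀ i : Fin k,
      ly (b i) ≤ 1 ∧ ry (b i) = (h : ℝ) - (T.dist r' (b i) : ℝ) + 2 :=
    Fin.forall_of_zero_one_mid_last (by omega) ⟨by norm_num [hb0.2.2.1], hb0.2.2.2⟩
      ⟨hb1.2.2.1.le, hb1.2.2.2⟩ ⟨by norm_num [hbk.2.2.1], hbk.2.2.2⟩
      fun i h2 hi => ⟨(hbi i h2 hi).2.2.1.le, (hbi i h2 hi).2.2.2⟩
  have hne : ∀ w : V, 2 ≤ T.degree w → (LeafSet T r' w).Nonempty := fun w hw => by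
    obtain ⟨s, t, hst, hL⟩ := hconsec w hw
    exact ⟨b s, hL ▸ ⟨s, le_rfl, hst, rfl⟩⟩
  obtain ⟨hlyv, hryv, hlxv⟩ := lShape_bounds_of_degree_pos (fun w => (hleaf w).1) hne
    (fun w => hmax.2 ⟨w, rfl⟩) hleafShape (fun w hw => ⟨(hintv w hw).1, (hintv w hw).2.2⟩)
    (hanc.degree_pos hconn.preconnected huv)
  obtain ⟨hlxu, hrxu, hlyu, hryu⟩ := hintv u (hanc.two_le_degree hconn.preconnected hr' huv)
  have hdepth : (T.dist r' u : ℝ) + T.dist u v = T.dist r' v := by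
    exact_mod_cast hanc.dist_add_dist hT
  have hstep : (1 : ℝ) ≤ T.dist u v := by exact_mod_cast hconn.pos_dist_of_ne huv
  have hlxvu : lx v ∈ lx '' LeafSet T r' u := image_mono hanc.leafSet_subset hlxv
  have hfin : (lx '' LeafSet T r' u).Finite := (toFinite _).image lx
  refine ⟨fun hmem => by linarith [hmem.1],
    ⟨hlxu ▸ csInf_le hfin.bddBelow hlxvu, hrxu ▸ le_csSup hfin.bddAbove hlxvu⟩, ?_⟩
  rw [hanc.isParent_iff huv, mem_Icc, ← Nat.cast_inj (R := ℝ), Nat.cast_one]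
  exact ⟨fun hmem => by linarith [hmem.2], fun hone => ⟨by linarith, by linarith⟩⟩
end

section
/- Let G be the triangular prism: the simple graph on vertices v_1, …, v_6 with edge set {v_1v_2, v_1v_5, v_1v_6, v_5v_6, v_2v_3, v_2v_4, v_3v_4, v_4v_5, v_3v_6}. Then there is no family S_1, …, S_6 of axis-parallel segments in ℝ² such that for all i ≠ j: S_i ∩ S_j ≠ ∅ if and only if v_iv_j is an edge of G. In other words, G has no B_0-VPG representation. -/
/-- `S` is an axis-parallel (horizontal or vertical) closed segment of positive length
in `ℝ²`. -/
def IsAxisParallelSegment (S : Set (ℝ × ℝ)) : Prop :=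
  ∃ p q : ℝ × ℝ, p ≠ q ∧ (p.1 = q.1 ∨ p.2 = q.2) ∧ S = segment ℝ p q

/-- The adjacency relation of the triangular prism on vertices `v_1, …, v_6`
(represented by `0, …, 5 : Fin 6`), with edge set
`{v₁v₂, v₁v₅, v₁v₆, v₅v₆, v₂v₃, v₂v₄, v₃v₄, v₄v₅, v₃v₆}`. -/
def PrismAdj (i j : Fin 6) : Prop :=
  (i, j) ∈ ([(0, 1), (0, 4), (0, 5), (4, 5), (1, 2), (1, 3), (2, 3), (3, 4), (2, 5)] :
      List (Fin 6 × Fin 6)) ∨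
  (j, i) ∈ ([(0, 1), (0, 4), (0, 5), (4, 5), (1, 2), (1, 3), (2, 3), (3, 4), (2, 5)] :
      List (Fin 6 × Fin 6))


/-- Any two points of an axis-parallel segment share a coordinate. -/
lemma aps_share {S : Set (ℝ × ℝ)} (h : IsAxisParallelSegment S) {u v : ℝ × ℝ}
    (hu : u ∈ S) (hv : v ∈ S) : u.1 = v.1 ∨ u.2 = v.2 := by
  obtain ⟨p, q, -, hor, rfl⟩ := h
  obtain ⟨a, b, -, -, hab, rfl⟩ := hu
  obtain ⟨c, d, -, -, hcd, rfl⟩ := hv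
  rcases hor with h | h
  · left
    simp only [Prod.fst_add, Prod.smul_fst, smul_eq_mul]
    rw [← h]; linear_combination (hab - hcd) * p.1
  · right
    simp only [Prod.snd_add, Prod.smul_snd, smul_eq_mul]
    rw [← h]; linear_combination (hab - hcd) * p.2

lemma aps_convex {S : Set (ℝ × ℝ)} (h : IsAxisParallelSegment S) : Convex ℝ S := by
  obtain ⟨p, q, -, -, rfl⟩ := h
  exact convex_segment p q

/-- betweenness on a vertical line -/
lemma between_v {S : Set (ℝ × ℝ)} (hS : Convex ℝ S) {u v w : ℝ × ℝ}
    (hu : u ∈ S) (hv : v ∈ S) (h1 : u.1 = v.1) (h2 : w.1 = u.1)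
    (hle1 : u.2 ≤ w.2) (hle2 : w.2 ≤ v.2) : w ∈ S := by
  have h3 : w.2 ∈ segment ℝ u.2 v.2 := by
    rw [segment_eq_Icc (le_trans hle1 hle2)]; exact ⟨hle1, hle2⟩
  obtain ⟨a, b, ha, hb, hab, hw⟩ := h3
  have : a • u + b • v = w := by
    apply Prod.ext
    · simp only [Prod.fst_add, Prod.smul_fst, smul_eq_mul]
      rw [← h1, h2]; linear_combination hab * u.1
    · simpa using hw
  rw [← this]; exact hS hu hv ha hb hab

/-- betweenness on a horizontal line -/
lemma between_h {S : Set (ℝ × ℝ)} (hS : Convex ℝ S) {u v w : ℝ × ℝ}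
    (hu : u ∈ S) (hv : v ∈ S) (h1 : u.2 = v.2) (h2 : w.2 = u.2)
    (hle1 : u.1 ≤ w.1) (hle2 : w.1 ≤ v.1) : w ∈ S := by
  have h3 : w.1 ∈ segment ℝ u.1 v.1 := by
    rw [segment_eq_Icc (le_trans hle1 hle2)]; exact ⟨hle1, hle2⟩
  obtain ⟨a, b, ha, hb, hab, hw⟩ := h3
  have : a • u + b • v = w := by
    apply Prod.ext
    · simpa using hw
    · simp only [Prod.snd_add, Prod.smul_snd, smul_eq_mul]
      rw [← h1, h2]; linear_combination hab * u.2
  rw [← this]; exact hS hu hv ha hb hab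

/-- Three pairwise-intersecting axis-parallel segments have a common point. -/
lemma triangle_common {S1 S2 S3 : Set (ℝ × ℝ)}
    (h1 : IsAxisParallelSegment S1) (h2 : IsAxisParallelSegment S2)
    (h3 : IsAxisParallelSegment S3)
    (h12 : (S1 ∩ S2).Nonempty) (h13 : (S1 ∩ S3).Nonempty) (h23 : (S2 ∩ S3).Nonempty) :
    ∃ c, c ∈ S1 ∧ c ∈ S2 ∧ c ∈ S3 := by
  obtain ⟨u, hu1, hu2⟩ := h12
  obtain ⟨v, hv1, hv3⟩ := h13
  obtain ⟨w, hw2, hw3⟩ := h23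
  have c1 := aps_convex h1
  have c2 := aps_convex h2
  have c3 := aps_convex h3
  rcases aps_share h1 hu1 hv1 with s1 | s1 <;>
    rcases aps_share h2 hu2 hw2 with s2 | s2 <;>
      rcases aps_share h3 hv3 hw3 with s3 | s3
  · -- all same x : median in y
    have e1 : u.1 = v.1 := s1
    have e2 : u.1 = w.1 := s2
    have e3 : v.1 = w.1 := by rw [← e1, e2]
    rcases le_total u.2 v.2 with o1 | o1 <;> rcases le_total v.2 w.2 with o2 | o2 <;>
      rcases le_total u.2 w.2 with o3 | o3
    · exact ⟨v, hv1, between_v c2 hu2 hw2 e2 e1.symm o1 o2, hv3⟩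
    · exact ⟨v, hv1, between_v c2 hu2 hw2 e2 e1.symm o1 o2, hv3⟩
    · exact ⟨w, between_v c1 hu1 hv1 e1 e2.symm o3 o2, hw2, hw3⟩
    · exact ⟨u, hu1, hu2, between_v c3 hw3 hv3 e3.symm e2 o3 o1⟩
    · exact ⟨u, hu1, hu2, between_v c3 hv3 hw3 e3 e1 o1 o3⟩
    · exact ⟨w, between_v c1 hv1 hu1 e1.symm e3.symm o2 o3, hw2, hw3⟩
    · exact ⟨v, hv1, between_v c2 hw2 hu2 e2.symm e3 o2 o1, hv3⟩
    · exact ⟨v, hv1, between_v c2 hw2 hu2 e2.symm e3 o2 o1, hv3⟩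
  · -- u.1=v.1, u.1=w.1, v.2=w.2 : v = w
    have : v = w := Prod.ext (s1.symm.trans s2) s3
    exact ⟨v, hv1, this ▸ hw2, hv3⟩
  · -- u.1=v.1, u.2=w.2, v.1=w.1 : u = w
    have : u = w := Prod.ext (s1.trans s3) s2
    exact ⟨u, hu1, hu2, this ▸ hw3⟩
  · -- u.1=v.1, u.2=w.2, v.2=w.2 : u = v
    have : u = v := Prod.ext s1 (s2.trans s3.symm)
    exact ⟨u, hu1, hu2, this ▸ hv3⟩
  · -- u.2=v.2, u.1=w.1, v.1=w.1 : u = v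
    have : u = v := Prod.ext (s2.trans s3.symm) s1
    exact ⟨u, hu1, hu2, this ▸ hv3⟩
  · -- u.2=v.2, u.1=w.1, v.2=w.2 : u = w
    have : u = w := Prod.ext s2 (s1.trans s3)
    exact ⟨u, hu1, hu2, this ▸ hw3⟩
  · -- u.2=v.2, u.2=w.2, v.1=w.1 : v = w
    have : v = w := Prod.ext s3 (s1.symm.trans s2)
    exact ⟨v, hv1, this ▸ hw2, hv3⟩
  · -- all same y : median in x
    have e1 : u.2 = v.2 := s1
    have e2 : u.2 = w.2 := s2
    have e3 : v.2 = w.2 := by rw [← e1, e2]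
    rcases le_total u.1 v.1 with o1 | o1 <;> rcases le_total v.1 w.1 with o2 | o2 <;>
      rcases le_total u.1 w.1 with o3 | o3
    · exact ⟨v, hv1, between_h c2 hu2 hw2 e2 e1.symm o1 o2, hv3⟩
    · exact ⟨v, hv1, between_h c2 hu2 hw2 e2 e1.symm o1 o2, hv3⟩
    · exact ⟨w, between_h c1 hu1 hv1 e1 e2.symm o3 o2, hw2, hw3⟩
    · exact ⟨u, hu1, hu2, between_h c3 hw3 hv3 e3.symm e2 o3 o1⟩
    · exact ⟨u, hu1, hu2, between_h c3 hv3 hw3 e3 e1 o1 o3⟩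
    · exact ⟨w, between_h c1 hv1 hu1 e1.symm e3.symm o2 o3, hw2, hw3⟩
    · exact ⟨v, hv1, between_h c2 hw2 hu2 e2.symm e3 o2 o1, hv3⟩
    · exact ⟨v, hv1, between_h c2 hw2 hu2 e2.symm e3 o2 o1, hv3⟩

/-- 1-dimensional impossibility: six "interval-like" sets on a line realizing the prism
pattern with all segments collinear is impossible. -/
lemma cyc1 (I0 I1 I2 I3 I4 I5 : Set ℝ)
    (b0 : ∀ a b c : ℝ, a ∈ I0 → b ∈ I0 → a ≤ c → c ≤ b → c ∈ I0)
    (b1 : ∀ a b c : ℝ, a ∈ I1 → b ∈ I1 → a ≤ c → c ≤ b → c ∈ I1)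
    (b2 : ∀ a b c : ℝ, a ∈ I2 → b ∈ I2 → a ≤ c → c ≤ b → c ∈ I2)
    (b3 : ∀ a b c : ℝ, a ∈ I3 → b ∈ I3 → a ≤ c → c ≤ b → c ∈ I3)
    (b4 : ∀ a b c : ℝ, a ∈ I4 → b ∈ I4 → a ≤ c → c ≤ b → c ∈ I4)
    (b5 : ∀ a b c : ℝ, a ∈ I5 → b ∈ I5 → a ≤ c → c ≤ b → c ∈ I5)
    {px qx x1 x2 x3 : ℝ}
    (hp0 : px ∈ I0) (hp4 : px ∈ I4) (hp5 : px ∈ I5)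
    (hq1 : qx ∈ I1) (hq2 : qx ∈ I2) (hq3 : qx ∈ I3)
    (hx10 : x1 ∈ I0) (hx11 : x1 ∈ I1)
    (hx25 : x2 ∈ I5) (hx22 : x2 ∈ I2)
    (hx34 : x3 ∈ I4) (hx33 : x3 ∈ I3)
    (e02 : ∀ x, x ∈ I0 → x ∉ I2) (e03 : ∀ x, x ∈ I0 → x ∉ I3)
    (e14 : ∀ x, x ∈ I1 → x ∉ I4) (e15 : ∀ x, x ∈ I1 → x ∉ I5)
    (e24 : ∀ x, x ∈ I2 → x ∉ I4) (e35 : ∀ x, x ∈ I3 → x ∉ I5)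
    (hlt : px < qx) : False := by
  have h1l : px ≤ x1 := by
    by_contra h; push_neg at h
    exact e14 _ (b1 _ _ _ hx11 hq1 h.le hlt.le) hp4
  have h1r : x1 ≤ qx := by
    by_contra h; push_neg at h
    exact e02 _ (b0 _ _ _ hp0 hx10 hlt.le h.le) hq2
  have h2l : px ≤ x2 := by
    by_contra h; push_neg at h
    exact e24 _ (b2 _ _ _ hx22 hq2 h.le hlt.le) hp4
  have h2r : x2 ≤ qx := by
    by_contra h; push_neg at h
    exact e35 _ hq3 (b5 _ _ _ hp5 hx25 hlt.le h.le)
  have h3l : px ≤ x3 := by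
    by_contra h; push_neg at h
    exact e03 _ hp0 (b3 _ _ _ hx33 hq3 h.le hlt.le)
  have h3r : x3 ≤ qx := by
    by_contra h; push_neg at h
    exact e14 _ hq1 (b4 _ _ _ hp4 hx34 hlt.le h.le)
  have c1 : x2 < x1 := by
    by_contra h; push_neg at h
    exact e15 _ hx11 (b5 _ _ _ hp5 hx25 h1l h)
  have c2 : x3 < x2 := by
    by_contra h; push_neg at h
    exact e24 _ hx22 (b4 _ _ _ hp4 hx34 h2l h)
  have c3 : x1 < x3 := by
    by_contra h; push_neg at h
    exact e03 _ (b0 _ _ _ hp0 hx10 h3l h) hx33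
  linarith

/-- the triangular prism has no B₀-VPG representation: there is no family
of axis-parallel segments `S₁, …, S₆` such that `Sᵢ ∩ Sⱼ ≠ ∅` iff `vᵢvⱼ` is an edge. -/
theorem stmt12 :
    ¬ ∃ S : Fin 6 → Set (ℝ × ℝ),
      (∀ i, IsAxisParallelSegment (S i)) ∧
      ∀ i j : Fin 6, i ≠ j → ((S i ∩ S j).Nonempty ↔ PrismAdj i j) := by
  rintro ⟨S, hseg, hadj⟩
  -- edges
  have ne04 : (S 0 ∩ S 4).Nonempty := (hadj 0 4 (by decide)).mpr (by unfold PrismAdj; decide)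
  have ne05 : (S 0 ∩ S 5).Nonempty := (hadj 0 5 (by decide)).mpr (by unfold PrismAdj; decide)
  have ne45 : (S 4 ∩ S 5).Nonempty := (hadj 4 5 (by decide)).mpr (by unfold PrismAdj; decide)
  have ne12 : (S 1 ∩ S 2).Nonempty := (hadj 1 2 (by decide)).mpr (by unfold PrismAdj; decide)
  have ne13 : (S 1 ∩ S 3).Nonempty := (hadj 1 3 (by decide)).mpr (by unfold PrismAdj; decide)
  have ne23 : (S 2 ∩ S 3).Nonempty := (hadj 2 3 (by decide)).mpr (by unfold PrismAdj; decide)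
  have ne01 : (S 0 ∩ S 1).Nonempty := (hadj 0 1 (by decide)).mpr (by unfold PrismAdj; decide)
  have ne52 : (S 5 ∩ S 2).Nonempty := (hadj 5 2 (by decide)).mpr (by unfold PrismAdj; decide)
  have ne43 : (S 4 ∩ S 3).Nonempty := (hadj 4 3 (by decide)).mpr (by unfold PrismAdj; decide)
  -- non-edges
  have E02 : ∀ z, z ∈ S 0 → z ∉ S 2 := fun z h0 h2 =>
    absurd ((hadj 0 2 (by decide)).mp ⟨z, h0, h2⟩) (by unfold PrismAdj; decide)
  have E03 : ∀ z, z ∈ S 0 → z ∉ S 3 := fun z h0 h3 =>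
    absurd ((hadj 0 3 (by decide)).mp ⟨z, h0, h3⟩) (by unfold PrismAdj; decide)
  have E14 : ∀ z, z ∈ S 1 → z ∉ S 4 := fun z h1 h4 =>
    absurd ((hadj 1 4 (by decide)).mp ⟨z, h1, h4⟩) (by unfold PrismAdj; decide)
  have E15 : ∀ z, z ∈ S 1 → z ∉ S 5 := fun z h1 h5 =>
    absurd ((hadj 1 5 (by decide)).mp ⟨z, h1, h5⟩) (by unfold PrismAdj; decide)
  have E24 : ∀ z, z ∈ S 2 → z ∉ S 4 := fun z h2 h4 =>
    absurd ((hadj 2 4 (by decide)).mp ⟨z, h2, h4⟩) (by unfold PrismAdj; decide)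
  have E35 : ∀ z, z ∈ S 3 → z ∉ S 5 := fun z h3 h5 =>
    absurd ((hadj 3 5 (by decide)).mp ⟨z, h3, h5⟩) (by unfold PrismAdj; decide)
  -- common points of the two triangles
  obtain ⟨p, hp0, hp4, hp5⟩ := triangle_common (hseg 0) (hseg 4) (hseg 5) ne04 ne05 ne45
  obtain ⟨q, hq1, hq2, hq3⟩ := triangle_common (hseg 1) (hseg 2) (hseg 3) ne12 ne13 ne23
  -- witnesses of the matching edges
  obtain ⟨z1, hz10, hz11⟩ := ne01
  obtain ⟨z2, hz25, hz22⟩ := ne52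
  obtain ⟨z3, hz34, hz33⟩ := ne43
  -- the witnesses differ from p and q
  have znp1 : z1 ≠ p := fun h => E14 p (h ▸ hz11) hp4
  have znq1 : z1 ≠ q := fun h => E02 q (h ▸ hz10) hq2
  have znp2 : z2 ≠ p := fun h => E02 p hp0 (h ▸ hz22)
  have znq2 : z2 ≠ q := fun h => E15 q hq1 (h ▸ hz25)
  have znp3 : z3 ≠ p := fun h => E03 p hp0 (h ▸ hz33)
  have znq3 : z3 ≠ q := fun h => E14 q hq1 (h ▸ hz34)
  -- shared-coordinate facts
  have sh1p := aps_share (hseg 0) hz10 hp0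
  have sh1q := aps_share (hseg 1) hz11 hq1
  have sh2p := aps_share (hseg 5) hz25 hp5
  have sh2q := aps_share (hseg 2) hz22 hq2
  have sh3p := aps_share (hseg 4) hz34 hp4
  have sh3q := aps_share (hseg 3) hz33 hq3
  by_cases hx : p.1 = q.1 <;> by_cases hy : p.2 = q.2
  · -- p = q : contradiction with non-edge 0–2
    exact E02 p hp0 ((Prod.ext hx hy) ▸ hq2)
  · -- p and q on a common vertical line
    have w1 : z1.1 = p.1 := by
      rcases sh1p with h | h <;> rcases sh1q with h' | h'
      · exact h
      · exact absurd (Prod.ext (h.trans hx) h') znq1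
      · exact absurd (Prod.ext (h'.trans hx.symm) h) znp1
      · exact absurd (h.symm.trans h') hy
    have w2 : z2.1 = p.1 := by
      rcases sh2p with h | h <;> rcases sh2q with h' | h'
      · exact h
      · exact absurd (Prod.ext (h.trans hx) h') znq2
      · exact absurd (Prod.ext (h'.trans hx.symm) h) znp2
      · exact absurd (h.symm.trans h') hy
    have w3 : z3.1 = p.1 := by
      rcases sh3p with h | h <;> rcases sh3q with h' | h'
      · exact h
      · exact absurd (Prod.ext (h.trans hx) h') znq3
      · exact absurd (Prod.ext (h'.trans hx.symm) h) znp3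
      · exact absurd (h.symm.trans h') hy
    set J : Fin 6 → Set ℝ := fun i => {y : ℝ | ((p.1, y) : ℝ × ℝ) ∈ S i} with hJ
    have bet : ∀ i, ∀ a b c : ℝ, a ∈ J i → b ∈ J i → a ≤ c → c ≤ b → c ∈ J i :=
      fun i a b c ha hb h1 h2 =>
        between_v (aps_convex (hseg i)) ha hb rfl rfl h1 h2
    have memp : ∀ i, p ∈ S i → p.2 ∈ J i := fun i h => by
      simpa [hJ, Prod.mk.eta] using h
    have memq : ∀ i, q ∈ S i → q.2 ∈ J i := fun i h => by
      have : ((p.1, q.2) : ℝ × ℝ) = q := Prod.ext hx rfl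
      simpa [hJ, this] using h
    have memz : ∀ (z : ℝ × ℝ), z.1 = p.1 → ∀ i, z ∈ S i → z.2 ∈ J i := fun z hz i h => by
      have : ((p.1, z.2) : ℝ × ℝ) = z := Prod.ext hz.symm rfl
      simpa [hJ, this] using h
    rcases lt_trichotomy p.2 q.2 with hlt | heq | hgt
    · exact cyc1 (J 0) (J 1) (J 2) (J 3) (J 4) (J 5)
        (bet 0) (bet 1) (bet 2) (bet 3) (bet 4) (bet 5)
        (memp 0 hp0) (memp 4 hp4) (memp 5 hp5)
        (memq 1 hq1) (memq 2 hq2) (memq 3 hq3)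
        (memz z1 w1 0 hz10) (memz z1 w1 1 hz11)
        (memz z2 w2 5 hz25) (memz z2 w2 2 hz22)
        (memz z3 w3 4 hz34) (memz z3 w3 3 hz33)
        (fun x h0 h2 => E02 _ h0 h2) (fun x h0 h3 => E03 _ h0 h3)
        (fun x h1 h4 => E14 _ h1 h4) (fun x h1 h5 => E15 _ h1 h5)
        (fun x h2 h4 => E24 _ h2 h4) (fun x h3 h5 => E35 _ h3 h5)
        hlt
    · exact hy heq
    · exact cyc1 (J 1) (J 0) (J 5) (J 4) (J 3) (J 2)
        (bet 1) (bet 0) (bet 5) (bet 4) (bet 3) (bet 2)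
        (memq 1 hq1) (memq 3 hq3) (memq 2 hq2)
        (memp 0 hp0) (memp 5 hp5) (memp 4 hp4)
        (memz z1 w1 1 hz11) (memz z1 w1 0 hz10)
        (memz z2 w2 2 hz22) (memz z2 w2 5 hz25)
        (memz z3 w3 3 hz33) (memz z3 w3 4 hz34)
        (fun x h1 h5 => E15 _ h1 h5) (fun x h1 h4 => E14 _ h1 h4)
        (fun x h0 h3 => E03 _ h0 h3) (fun x h0 h2 => E02 _ h0 h2)
        (fun x h5 h3 => E35 _ h3 h5) (fun x h4 h2 => E24 _ h2 h4)
        hgt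
  · -- p and q on a common horizontal line
    have w1 : z1.2 = p.2 := by
      rcases sh1p with h | h <;> rcases sh1q with h' | h'
      · exact absurd (h.symm.trans h') hx
      · exact absurd (Prod.ext h (h'.trans hy.symm)) znp1
      · exact absurd (Prod.ext h' (h.trans hy)) znq1
      · exact h
    have w2 : z2.2 = p.2 := by
      rcases sh2p with h | h <;> rcases sh2q with h' | h'
      · exact absurd (h.symm.trans h') hx
      · exact absurd (Prod.ext h (h'.trans hy.symm)) znp2
      · exact absurd (Prod.ext h' (h.trans hy)) znq2
      · exact h
    have w3 : z3.2 = p.2 := by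
      rcases sh3p with h | h <;> rcases sh3q with h' | h'
      · exact absurd (h.symm.trans h') hx
      · exact absurd (Prod.ext h (h'.trans hy.symm)) znp3
      · exact absurd (Prod.ext h' (h.trans hy)) znq3
      · exact h
    set J : Fin 6 → Set ℝ := fun i => {x : ℝ | ((x, p.2) : ℝ × ℝ) ∈ S i} with hJ
    have bet : ∀ i, ∀ a b c : ℝ, a ∈ J i → b ∈ J i → a ≤ c → c ≤ b → c ∈ J i :=
      fun i a b c ha hb h1 h2 =>
        between_h (aps_convex (hseg i)) ha hb rfl rfl h1 h2
    have memp : ∀ i, p ∈ S i → p.1 ∈ J i := fun i h => by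
      simpa [hJ, Prod.mk.eta] using h
    have memq : ∀ i, q ∈ S i → q.1 ∈ J i := fun i h => by
      have : ((q.1, p.2) : ℝ × ℝ) = q := Prod.ext rfl hy
      simpa [hJ, this] using h
    have memz : ∀ (z : ℝ × ℝ), z.2 = p.2 → ∀ i, z ∈ S i → z.1 ∈ J i := fun z hz i h => by
      have : ((z.1, p.2) : ℝ × ℝ) = z := Prod.ext rfl hz.symm
      simpa [hJ, this] using h
    rcases lt_trichotomy p.1 q.1 with hlt | heq | hgt
    · exact cyc1 (J 0) (J 1) (J 2) (J 3) (J 4) (J 5)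
        (bet 0) (bet 1) (bet 2) (bet 3) (bet 4) (bet 5)
        (memp 0 hp0) (memp 4 hp4) (memp 5 hp5)
        (memq 1 hq1) (memq 2 hq2) (memq 3 hq3)
        (memz z1 w1 0 hz10) (memz z1 w1 1 hz11)
        (memz z2 w2 5 hz25) (memz z2 w2 2 hz22)
        (memz z3 w3 4 hz34) (memz z3 w3 3 hz33)
        (fun x h0 h2 => E02 _ h0 h2) (fun x h0 h3 => E03 _ h0 h3)
        (fun x h1 h4 => E14 _ h1 h4) (fun x h1 h5 => E15 _ h1 h5)
        (fun x h2 h4 => E24 _ h2 h4) (fun x h3 h5 => E35 _ h3 h5)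
        hlt
    · exact hx heq
    · exact cyc1 (J 1) (J 0) (J 5) (J 4) (J 3) (J 2)
        (bet 1) (bet 0) (bet 5) (bet 4) (bet 3) (bet 2)
        (memq 1 hq1) (memq 3 hq3) (memq 2 hq2)
        (memp 0 hp0) (memp 5 hp5) (memp 4 hp4)
        (memz z1 w1 1 hz11) (memz z1 w1 0 hz10)
        (memz z2 w2 2 hz22) (memz z2 w2 5 hz25)
        (memz z3 w3 3 hz33) (memz z3 w3 4 hz34)
        (fun x h1 h5 => E15 _ h1 h5) (fun x h1 h4 => E14 _ h1 h4)
        (fun x h0 h3 => E03 _ h0 h3) (fun x h0 h2 => E02 _ h0 h2)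
        (fun x h5 h3 => E35 _ h3 h5) (fun x h4 h2 => E24 _ h2 h4)
        hgt
  · -- generic position : the two crosses meet in only two points
    have d1 : z1 = (q.1, p.2) ∨ z1 = (p.1, q.2) := by
      rcases sh1p with h | h <;> rcases sh1q with h' | h'
      · exact absurd (h.symm.trans h') hx
      · exact Or.inr (Prod.ext h h')
      · exact Or.inl (Prod.ext h' h)
      · exact absurd (h.symm.trans h') hy
    have d2 : z2 = (q.1, p.2) ∨ z2 = (p.1, q.2) := by
      rcases sh2p with h | h <;> rcases sh2q with h' | h'
      · exact absurd (h.symm.trans h') hx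
      · exact Or.inr (Prod.ext h h')
      · exact Or.inl (Prod.ext h' h)
      · exact absurd (h.symm.trans h') hy
    have d3 : z3 = (q.1, p.2) ∨ z3 = (p.1, q.2) := by
      rcases sh3p with h | h <;> rcases sh3q with h' | h'
      · exact absurd (h.symm.trans h') hx
      · exact Or.inr (Prod.ext h h')
      · exact Or.inl (Prod.ext h' h)
      · exact absurd (h.symm.trans h') hy
    rcases d1 with d1 | d1 <;> rcases d2 with d2 | d2 <;> rcases d3 with d3 | d3
    · exact E02 z1 hz10 ((d1.trans d2.symm) ▸ hz22)
    · exact E02 z1 hz10 ((d1.trans d2.symm) ▸ hz22)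
    · exact E03 z1 hz10 ((d1.trans d3.symm) ▸ hz33)
    · exact E24 z2 hz22 ((d2.trans d3.symm) ▸ hz34)
    · exact E24 z2 hz22 ((d2.trans d3.symm) ▸ hz34)
    · exact E03 z1 hz10 ((d1.trans d3.symm) ▸ hz33)
    · exact E02 z1 hz10 ((d1.trans d2.symm) ▸ hz22)
    · exact E02 z1 hz10 ((d1.trans d2.symm) ▸ hz22)
end
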